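/- arXiv:1506.04661 — 5 statements merged into one kernel-verified Lean document; each statement's English description precedes it below -/
import Mathlib

section
/- Let A be a real n×n matrix with xᵀAx > 0 for all nonzero real x (not necessarily symmetric), C a real m×m symmetric positive semidefinite matrix, B a real m×n matrix of full row rank, and α, β > 0 real numbers. Define the block matrices M = (1/2)·[[αI + A, Bᵀ], [−B, βI + C]] and N = (1/2)·[[αI − A, −Bᵀ], [B, βI − C]] of size (n+m)×(n+m). If λ ∈ ℂ and u ∈ ℂ^{n+m} is a nonzero vector with N u = λ M u (so λ is an eigenvalue of the iteration matrix M⁻¹N), then |λ| < 1. -/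
open Matrix

/-- The shift-splitting matrix `M = (1/2)⬝[[αI + A, Bᵀ], [−B, βI + C]]`. -/
noncomputable def MSS {n m : ℕ} (A : Matrix (Fin n) (Fin n) ℝ) (B : Matrix (Fin m) (Fin n) ℝ)
    (C : Matrix (Fin m) (Fin m) ℝ) (α β : ℝ) :
    Matrix (Fin n ⊕ Fin m) (Fin n ⊕ Fin m) ℝ :=
  (1 / 2 : ℝ) • Matrix.fromBlocks (α • (1 : Matrix (Fin n) (Fin n) ℝ) + A) Bᵀ (-B)
    (β • (1 : Matrix (Fin m) (Fin m) ℝ) + C)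

/-- The shift-splitting matrix `N = (1/2)⬝[[αI − A, −Bᵀ], [B, βI − C]]`. -/
noncomputable def NSS {n m : ℕ} (A : Matrix (Fin n) (Fin n) ℝ) (B : Matrix (Fin m) (Fin n) ℝ)
    (C : Matrix (Fin m) (Fin m) ℝ) (α β : ℝ) :
    Matrix (Fin n ⊕ Fin m) (Fin n ⊕ Fin m) ℝ :=
  (1 / 2 : ℝ) • Matrix.fromBlocks (α • (1 : Matrix (Fin n) (Fin n) ℝ) - A) (-Bᵀ) B
    (β • (1 : Matrix (Fin m) (Fin m) ℝ) - C)

/-! With `D = diag(αI, βI)` and `𝒜` the saddle point matrix, `M = (D + 𝒜)/2` and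
`N = (D − 𝒜)/2`, so `N u = λ M u` gives `(1 − λ) σ = (1 + λ) τ` for `σ = u*Du > 0` and
`τ = u*𝒜u`. The skew coupling `[[0, Bᵀ], [−B, 0]]` contributes nothing to
`Re τ = Re x*Ax + Re y*Cy ≥ 0`, and `|σ − τ| < |σ + τ|` as soon as `Re τ > 0`, whence `|λ| < 1`.
`Re τ` vanishes only if `x = 0`; the first block row then reads `(1 + λ) Bᵀ y = 0` with `λ ≠ −1`,
and full row rank forces `y = 0`. -/

open Complex
open scoped ComplexOrder

variable {ι κ : Type*}

lemma Complex.re_star_dotProduct [Fintype ι] (v w : ι → ℂ) :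
    (star v ⬝ᵥ w).re = (re ∘ v) ⬝ᵥ (re ∘ w) + (im ∘ v) ⬝ᵥ (im ∘ w) := by
  simp [dotProduct, Complex.re_sum, Finset.sum_add_distrib]

lemma Complex.re_comp_map_ofReal_mulVec [Fintype κ] (P : Matrix ι κ ℝ) (v : κ → ℂ) :
    re ∘ (P.map ofReal *ᵥ v) = P *ᵥ (re ∘ v) := by
  ext i
  simp [mulVec, dotProduct, Complex.re_sum]

lemma Complex.im_comp_map_ofReal_mulVec [Fintype κ] (P : Matrix ι κ ℝ) (v : κ → ℂ) :
    im ∘ (P.map ofReal *ᵥ v) = P *ᵥ (im ∘ v) := by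
  ext i
  simp [mulVec, dotProduct, Complex.im_sum]

lemma Complex.re_star_dotProduct_map_ofReal_mulVec [Fintype ι] (P : Matrix ι ι ℝ) (v : ι → ℂ) :
    (star v ⬝ᵥ P.map ofReal *ᵥ v).re
      = (re ∘ v) ⬝ᵥ P *ᵥ (re ∘ v) + (im ∘ v) ⬝ᵥ P *ᵥ (im ∘ v) := by
  rw [re_star_dotProduct, re_comp_map_ofReal_mulVec, im_comp_map_ofReal_mulVec]

lemma Complex.re_star_dotProduct_map_ofReal_mulVec_nonneg [Fintype ι] {P : Matrix ι ι ℝ}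
    (hP : ∀ x, 0 ≤ x ⬝ᵥ P *ᵥ x) (v : ι → ℂ) : 0 ≤ (star v ⬝ᵥ P.map ofReal *ᵥ v).re := by
  rw [re_star_dotProduct_map_ofReal_mulVec]
  exact add_nonneg (hP _) (hP _)

lemma Complex.re_star_dotProduct_map_ofReal_mulVec_pos [Fintype ι] {P : Matrix ι ι ℝ}
    (hP : ∀ x, x ≠ 0 → 0 < x ⬝ᵥ P *ᵥ x) {v : ι → ℂ} (hv : v ≠ 0) :
    0 < (star v ⬝ᵥ P.map ofReal *ᵥ v).re := by
  have hP' (x : ι → ℝ) : 0 ≤ x ⬝ᵥ P *ᵥ x := by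
    rcases eq_or_ne x 0 with rfl | hx
    · simp
    · exact (hP x hx).le
  rw [re_star_dotProduct_map_ofReal_mulVec]
  by_cases hre : re ∘ v = 0
  · have him : im ∘ v ≠ 0 := fun him =>
      hv (funext fun i => Complex.ext (congrFun hre i) (congrFun him i))
    exact add_pos_of_nonneg_of_pos (hP' _) (hP _ him)
  · exact add_pos_of_pos_of_nonneg (hP _ hre) (hP' _)

lemma Complex.eq_zero_of_map_ofReal_mulVec_eq_zero [Fintype κ] {P : Matrix ι κ ℝ}
    (hP : Function.Injective P.mulVec) {v : κ → ℂ} (h : P.map ofReal *ᵥ v = 0) : v = 0 := by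
  have hre : P *ᵥ (re ∘ v) = P *ᵥ 0 := by
    rw [← re_comp_map_ofReal_mulVec, h, mulVec_zero]; rfl
  have him : P *ᵥ (im ∘ v) = P *ᵥ 0 := by
    rw [← im_comp_map_ofReal_mulVec, h, mulVec_zero]; rfl
  exact funext fun i => Complex.ext (congrFun (hP hre) i) (congrFun (hP him) i)

lemma Matrix.mulVec_transpose_injective_of_rank_eq [Fintype ι] [Fintype κ] {K : Type*} [Field K]
    {B : Matrix κ ι K} (hB : B.rank = Fintype.card κ) : Function.Injective Bᵀ.mulVec := by
  have hrows : LinearIndependent K B.row := by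
    rw [linearIndependent_iff_card_eq_finrank_span, Set.finrank, ← rank_eq_finrank_span_row, hB]
  rw [show Bᵀ.mulVec = fun v => v ᵥ* B from funext (mulVec_transpose B)]
  exact vecMul_injective_iff.mpr hrows

lemma Complex.star_dotProduct_map_ofReal_diagonal_mulVec_pos [Fintype ι] [DecidableEq ι]
    {d : ι → ℝ} (hd : ∀ i, 0 < d i) {v : ι → ℂ} (hv : v ≠ 0) :
    0 < star v ⬝ᵥ (diagonal d).map ofReal *ᵥ v := by
  rw [diagonal_map ofReal_zero]
  exact (posDef_diagonal_iff.mpr fun i => zero_lt_real.mpr (hd i)).dotProduct_mulVec_pos hv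

lemma Complex.norm_lt_one_of_one_sub_mul_eq_one_add_mul {σ τ lam : ℂ} (hσ : 0 < σ)
    (hτ : 0 < τ.re) (h : (1 - lam) * σ = (1 + lam) * τ) : ‖lam‖ < 1 := by
  obtain ⟨hσre, hσim⟩ : 0 < σ.re ∧ 0 = σ.im := lt_def.mp hσ
  have hlam : lam * (σ + τ) = σ - τ := by linear_combination -h
  have hlt : ‖σ - τ‖ < ‖σ + τ‖ := by
    rw [← sq_lt_sq₀ (norm_nonneg _) (norm_nonneg _), Complex.sq_norm, Complex.sq_norm,
      normSq_apply, normSq_apply]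
    simp only [sub_re, add_re, sub_im, add_im, ← hσim]
    nlinarith
  rw [← hlam, norm_mul] at hlt
  exact (mul_lt_iff_lt_one_left ((mul_nonneg (norm_nonneg _) (norm_nonneg _)).trans_lt hlt)).mp
    hlt

lemma one_sub_smul_mulVec_eq_one_add_smul_mulVec_of_half [Fintype ι] [DecidableEq ι]
    {D S : Matrix ι ι ℝ} {u : ι → ℂ} {lam : ℂ}
    (h : ((1 / 2 : ℝ) • (D - S)).map ofReal *ᵥ u = lam • ((1 / 2 : ℝ) • (D + S)).map ofReal *ᵥ u) :
    (1 - lam) • D.map ofReal *ᵥ u = (1 + lam) • S.map ofReal *ᵥ u := by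
  have hmap (P : Matrix ι ι ℝ) : P.map ofReal = ofRealAm.mapMatrix P := rfl
  simp only [hmap, map_smul, map_sub, map_add, smul_mulVec, sub_mulVec, add_mulVec] at h ⊢
  linear_combination (norm := module) (2 : ℂ) • h

section SaddlePoint

variable {n m R : Type*}

def saddlePointMatrix [Neg R] (A : Matrix n n R) (B : Matrix m n R) (C : Matrix m m R) :
    Matrix (n ⊕ m) (n ⊕ m) R :=
  fromBlocks A Bᵀ (-B) C

lemma dotProduct_saddlePointMatrix_mulVec [Fintype n] [Fintype m] [CommRing R] (A : Matrix n n R)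
    (B : Matrix m n R) (C : Matrix m m R) (x : n → R) (y : m → R) :
    Sum.elim x y ⬝ᵥ saddlePointMatrix A B C *ᵥ Sum.elim x y = x ⬝ᵥ A *ᵥ x + y ⬝ᵥ C *ᵥ y := by
  have hB : x ⬝ᵥ Bᵀ *ᵥ y = y ⬝ᵥ B *ᵥ x := by
    rw [mulVec_transpose, dotProduct_comm, dotProduct_mulVec]
  simp only [saddlePointMatrix, fromBlocks_mulVec, Sum.elim_comp_inl, Sum.elim_comp_inr,
    sumElim_dotProduct_sumElim, dotProduct_add, neg_mulVec, dotProduct_neg, hB]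
  ring

def shiftMatrix [DecidableEq n] [DecidableEq m] [Zero R] (α β : R) : Matrix (n ⊕ m) (n ⊕ m) R :=
  diagonal (Sum.elim (fun _ => α) fun _ => β)

lemma re_star_dotProduct_map_ofReal_saddlePointMatrix_mulVec [Fintype n] [Fintype m]
    (A : Matrix n n ℝ) (B : Matrix m n ℝ) (C : Matrix m m ℝ) (x : n → ℂ) (y : m → ℂ) :
    (star (Sum.elim x y) ⬝ᵥ (saddlePointMatrix A B C).map ofReal *ᵥ Sum.elim x y).re
      = (star x ⬝ᵥ A.map ofReal *ᵥ x).re + (star y ⬝ᵥ C.map ofReal *ᵥ y).re := by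
  simp only [re_star_dotProduct_map_ofReal_mulVec, Sum.comp_elim,
    dotProduct_saddlePointMatrix_mulVec]
  ring

end SaddlePoint

section ShiftSplitting

variable {n m : ℕ} (A : Matrix (Fin n) (Fin n) ℝ) (B : Matrix (Fin m) (Fin n) ℝ)
  (C : Matrix (Fin m) (Fin m) ℝ) (α β : ℝ)

lemma MSS_eq : MSS A B C α β = (1 / 2 : ℝ) • (shiftMatrix α β + saddlePointMatrix A B C) := by
  ext (i | i) (j | j) <;> simp [MSS, shiftMatrix, saddlePointMatrix, one_apply, diagonal_apply]

lemma NSS_eq : NSS A B C α β = (1 / 2 : ℝ) • (shiftMatrix α β - saddlePointMatrix A B C) := by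
  ext (i | i) (j | j) <;> simp [NSS, shiftMatrix, saddlePointMatrix, one_apply, diagonal_apply]

end ShiftSplitting

/-- For the shift-splitting of the generalized saddle point matrix with
positive definite (non-necessarily-symmetric) `A`, symmetric positive semidefinite `C`,
full-row-rank `B` and `α, β > 0`: any generalized eigenvalue `λ` with `N u = λ M u`,
`u ≠ 0`, satisfies `|λ| < 1`. -/
theorem eigenvalue_abs_lt_one
    (n m : ℕ) (A : Matrix (Fin n) (Fin n) ℝ)
    (hA : ∀ x : Fin n → ℝ, x ≠ 0 → 0 < x ⬝ᵥ A.mulVec x)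
    (C : Matrix (Fin m) (Fin m) ℝ) (hC : C.PosSemidef)
    (B : Matrix (Fin m) (Fin n) ℝ) (hB : B.rank = m)
    (α β : ℝ) (hα : 0 < α) (hβ : 0 < β)
    (lam : ℂ) (u : Fin n ⊕ Fin m → ℂ) (hu : u ≠ 0)
    (heig : ((NSS A B C α β).map Complex.ofReal).mulVec u
      = lam • ((MSS A B C α β).map Complex.ofReal).mulVec u) :
    ‖lam‖ < 1 := by
  obtain ⟨x, y, rfl⟩ : ∃ x y, u = Sum.elim x y :=
    ⟨u ∘ Sum.inl, u ∘ Sum.inr, (Sum.elim_comp_inl_inr u).symm⟩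
  rw [NSS_eq, MSS_eq] at heig
  have hvec := one_sub_smul_mulVec_eq_one_add_smul_mulVec_of_half heig
  set v := Sum.elim x y
  set σ := star v ⬝ᵥ (shiftMatrix α β).map ofReal *ᵥ v
  set τ := star v ⬝ᵥ (saddlePointMatrix A B C).map ofReal *ᵥ v
  have hscalar : (1 - lam) * σ = (1 + lam) * τ := by
    simpa only [dotProduct_smul, smul_eq_mul] using congrArg (star v ⬝ᵥ ·) hvec
  have hσ : 0 < σ := star_dotProduct_map_ofReal_diagonal_mulVec_pos
    (Sum.forall.mpr ⟨fun _ => hα, fun _ => hβ⟩) hu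
  have hx : x ≠ 0 := by
    rintro rfl
    have hlam : 1 + lam ≠ 0 := by
      intro hlam
      have h2σ : (2 : ℂ) * σ = 0 := by linear_combination hscalar + (σ + τ) * hlam
      exact hσ.ne' ((mul_eq_zero.mp h2σ).resolve_left two_ne_zero)
    have hBy : (Bᵀ).map ofReal *ᵥ y = 0 := by
      funext i
      have := congrFun hvec (Sum.inl i)
      simp only [v, shiftMatrix, saddlePointMatrix, ofReal_zero, diagonal_map, fromBlocks_map,
        Pi.smul_apply, mulVec_diagonal, fromBlocks_mulVec, Sum.elim_inl, Sum.elim_comp_inl,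
        Sum.elim_comp_inr, Pi.zero_apply, mulVec_zero, mul_zero, zero_add, smul_eq_mul,
        zero_eq_mul] at this
      exact this.resolve_left hlam
    have hy := eq_zero_of_map_ofReal_mulVec_eq_zero
      (mulVec_transpose_injective_of_rank_eq (hB.trans (Fintype.card_fin m).symm)) hBy
    exact hu (by simp [v, hy])
  have hτ : 0 < τ.re := by
    rw [re_star_dotProduct_map_ofReal_saddlePointMatrix_mulVec]
    exact add_pos_of_pos_of_nonneg (re_star_dotProduct_map_ofReal_mulVec_pos hA hx)
      (re_star_dotProduct_map_ofReal_mulVec_nonneg hC.dotProduct_mulVec_nonneg y)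
  exact norm_lt_one_of_one_sub_mul_eq_one_add_mul hσ hτ hscalar
end

section
/- Let A be a real n×n matrix with xᵀAx > 0 for all nonzero real x, C a real m×m symmetric positive semidefinite matrix, B a real m×n matrix of full row rank, and α, β > 0. With M = (1/2)·[[αI + A, Bᵀ], [−B, βI + C]] and N = (1/2)·[[αI − A, −Bᵀ], [B, βI − C]], if λ ∈ ℂ and u ∈ ℂ^{n+m} is nonzero with N u = λ M u, then λ ≠ 1 and λ ≠ −1. -/
open Matrix

namespace Matrix

variable {k l : Type*} [Fintype k]

theorem re_map_ofReal_mulVec (P : Matrix l k ℝ) (z : k → ℂ) (i : l) :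
    ((P.map Complex.ofReal *ᵥ z) i).re = (P *ᵥ fun j => (z j).re) i := by
  simp [mulVec, dotProduct, Complex.re_sum]

theorem im_map_ofReal_mulVec (P : Matrix l k ℝ) (z : k → ℂ) (i : l) :
    ((P.map Complex.ofReal *ᵥ z) i).im = (P *ᵥ fun j => (z j).im) i := by
  simp [mulVec, dotProduct, Complex.im_sum]

theorem eq_zero_of_map_ofReal_mulVec_eq_zero {P : Matrix l k ℝ}
    (hP : ∀ v, P *ᵥ v = 0 → v = 0) {z : k → ℂ} (hz : P.map Complex.ofReal *ᵥ z = 0) :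
    z = 0 := by
  have hre := hP (fun j => (z j).re) <| funext fun i => by simp [← re_map_ofReal_mulVec, hz]
  have him := hP (fun j => (z j).im) <| funext fun i => by simp [← im_map_ofReal_mulVec, hz]
  exact funext fun j => Complex.ext (congrFun hre j) (congrFun him j)

theorem vecMul_injective_of_rank_eq_card [Fintype l] {K : Type*} [Field K] {B : Matrix l k K}
    (hB : B.rank = Fintype.card l) :
    Function.Injective B.vecMul := by
  rw [vecMul_injective_iff, linearIndependent_iff_card_eq_finrank_span, Set.finrank,
    ← rank_eq_finrank_span_row, hB]

theorem eq_zero_of_diagonal_mulVec_eq_zero [DecidableEq k] {R : Type*} [Semiring R]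
    [NoZeroDivisors R] {d : k → R} (hd : ∀ i, d i ≠ 0) {v : k → R} (hv : diagonal d *ᵥ v = 0) :
    v = 0 :=
  funext fun i => by simpa [mulVec_diagonal, hd i] using congrFun hv i

theorem eq_zero_of_saddlePoint_mulVec_eq_zero [Fintype l] {A : Matrix k k ℝ} {B : Matrix l k ℝ}
    {C : Matrix l l ℝ} (hA : ∀ x, x ≠ 0 → 0 < x ⬝ᵥ A *ᵥ x) (hC : C.PosSemidef)
    (hB : Function.Injective B.vecMul) {v : k ⊕ l → ℝ}
    (hv : fromBlocks A Bᵀ (-B) C *ᵥ v = 0) : v = 0 := by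
  obtain ⟨x, y, rfl⟩ : ∃ x y, v = Sum.elim x y := ⟨_, _, (Sum.elim_comp_inl_inr v).symm⟩
  rw [fromBlocks_mulVec, Sum.elim_comp_inl, Sum.elim_comp_inr, ← Sum.elim_zero_zero,
    Sum.elim_eq_iff] at hv
  obtain ⟨h₁, h₂⟩ := hv
  -- the coupling terms `xᵀBᵀy` and `-yᵀBx` cancel
  have energy : x ⬝ᵥ A *ᵥ x + y ⬝ᵥ C *ᵥ y = 0 := by
    have := congrArg₂ (· + ·) (congrArg (x ⬝ᵥ ·) h₁) (congrArg (y ⬝ᵥ ·) h₂)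
    simp only [dotProduct_add, dotProduct_zero, neg_mulVec, dotProduct_neg] at this
    rw [dotProduct_mulVec x Bᵀ, vecMul_transpose, dotProduct_comm (B *ᵥ x)] at this
    linarith
  have hx : x = 0 := by
    by_contra hx
    have hCy : 0 ≤ y ⬝ᵥ C *ᵥ y := by simpa using hC.dotProduct_mulVec_nonneg y
    linarith [hA x hx]
  have hy : y = 0 := hB <| by
    simpa [hx, mulVec_transpose] using h₁
  rw [hx, hy, Sum.elim_zero_zero]

end Matrix

section ShiftSplitting

variable {n m : ℕ} (A : Matrix (Fin n) (Fin n) ℝ) (B : Matrix (Fin m) (Fin n) ℝ)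
  (C : Matrix (Fin m) (Fin m) ℝ) (α β : ℝ)

theorem MSS_sub_NSS : MSS A B C α β - NSS A B C α β = fromBlocks A Bᵀ (-B) C := by
  ext (i | i) (j | j) <;> simp [MSS, NSS] <;> ring

theorem MSS_add_NSS :
    MSS A B C α β + NSS A B C α β = diagonal (Sum.elim (fun _ => α) fun _ => β) := by
  ext (i | i) (j | j) <;> simp [MSS, NSS, one_apply, diagonal_apply] <;> split_ifs <;> ring

end ShiftSplitting

/-- In the shift-splitting setting, a generalized eigenvalue `λ` with
`N u = λ M u`, `u ≠ 0`, satisfies `λ ≠ 1` and `λ ≠ −1`. -/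
theorem eigenvalue_ne_one_and_ne_neg_one
    (n m : ℕ) (A : Matrix (Fin n) (Fin n) ℝ)
    (hA : ∀ x : Fin n → ℝ, x ≠ 0 → 0 < x ⬝ᵥ A.mulVec x)
    (C : Matrix (Fin m) (Fin m) ℝ) (hC : C.PosSemidef)
    (B : Matrix (Fin m) (Fin n) ℝ) (hB : B.rank = m)
    (α β : ℝ) (hα : 0 < α) (hβ : 0 < β)
    (lam : ℂ) (u : Fin n ⊕ Fin m → ℂ) (hu : u ≠ 0)
    (heig : ((NSS A B C α β).map Complex.ofReal).mulVec u
      = lam • ((MSS A B C α β).map Complex.ofReal).mulVec u) :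
    lam ≠ 1 ∧ lam ≠ -1 := by
  constructor
  · rintro rfl
    have hB_inj : Function.Injective B.vecMul :=
      vecMul_injective_of_rank_eq_card (hB.trans (Fintype.card_fin m).symm)
    refine hu <| eq_zero_of_map_ofReal_mulVec_eq_zero
      (fun _ => eq_zero_of_saddlePoint_mulVec_eq_zero hA hC hB_inj) ?_
    rw [← MSS_sub_NSS, Matrix.map_sub _ Complex.ofReal_sub, sub_mulVec, heig, one_smul, sub_self]
  · rintro rfl
    have hd : ∀ i, Sum.elim (fun _ : Fin n => α) (fun _ : Fin m => β) i ≠ 0 := by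
      rintro (i | i)
      exacts [hα.ne', hβ.ne']
    refine hu <| eq_zero_of_map_ofReal_mulVec_eq_zero
      (fun _ => eq_zero_of_diagonal_mulVec_eq_zero hd) ?_
    rw [← MSS_add_NSS, Matrix.map_add _ Complex.ofReal_add, add_mulVec, heig, neg_one_smul,
      add_neg_cancel]
end

section
/- Let A be a real n×n matrix with xᵀAx > 0 for all nonzero real x (not necessarily symmetric), C a real m×m symmetric positive semidefinite matrix, and B a real m×n matrix of full row rank. Then the (n+m)×(n+m) block matrix 𝒜 = [[A, Bᵀ], [−B, C]] is invertible; equivalently, the generalized saddle point problem 𝒜u = b has a unique solution for every right-hand side b. -/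
open Matrix

lemma BT_injective_aux (n m : ℕ) (B : Matrix (Fin m) (Fin n) ℝ) (hB : B.rank = m)
    (y : Fin m → ℝ) (hy : Bᵀ.mulVec y = 0) : y = 0 := by
  have hrt : Bᵀ.rank = m := by rw [Matrix.rank_transpose]; exact hB
  have hker : LinearMap.ker Bᵀ.mulVecLin = ⊥ := by
    have h := LinearMap.finrank_range_add_finrank_ker Bᵀ.mulVecLin
    rw [show Module.finrank ℝ (LinearMap.range Bᵀ.mulVecLin) = m from hrt] at h
    simp only [Module.finrank_fintype_fun_eq_card, Fintype.card_fin] at h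
    have : Module.finrank ℝ (LinearMap.ker Bᵀ.mulVecLin) = 0 := by omega
    exact Submodule.finrank_eq_zero.mp this
  have hmem : y ∈ LinearMap.ker Bᵀ.mulVecLin := hy
  rw [hker] at hmem
  simpa using hmem

lemma saddle_ker_aux (n m : ℕ) (A : Matrix (Fin n) (Fin n) ℝ)
    (hA : ∀ x : Fin n → ℝ, x ≠ 0 → 0 < x ⬝ᵥ A.mulVec x)
    (C : Matrix (Fin m) (Fin m) ℝ) (hC : C.PosSemidef)
    (B : Matrix (Fin m) (Fin n) ℝ) (hB : B.rank = m)
    (u : Fin n ⊕ Fin m → ℝ)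
    (hu : (Matrix.fromBlocks A Bᵀ (-B) C).mulVec u = 0) : u = 0 := by
  set x : Fin n → ℝ := u ∘ Sum.inl with hx
  set y : Fin m → ℝ := u ∘ Sum.inr with hy
  have hu' : (Matrix.fromBlocks A Bᵀ (-B) C).mulVec (Sum.elim x y) = 0 := by
    rw [show Sum.elim x y = u by ext (i | j) <;> rfl]; exact hu
  rw [Matrix.fromBlocks_mulVec] at hu'
  have h1 : A.mulVec x + Bᵀ.mulVec y = 0 := by
    funext i; simpa using congrFun hu' (Sum.inl i)
  have h2 : (-B).mulVec x + C.mulVec y = 0 := by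
    funext j; simpa using congrFun hu' (Sum.inr j)
  have e1 : x ⬝ᵥ A.mulVec x + x ⬝ᵥ Bᵀ.mulVec y = 0 := by
    rw [← dotProduct_add, h1, dotProduct_zero]
  have e2 : y ⬝ᵥ (-B).mulVec x + y ⬝ᵥ C.mulVec y = 0 := by
    rw [← dotProduct_add, h2, dotProduct_zero]
  have ecross : x ⬝ᵥ Bᵀ.mulVec y = y ⬝ᵥ B.mulVec x := by
    rw [Matrix.dotProduct_mulVec, Matrix.vecMul_transpose, dotProduct_comm]
  have eneg : y ⬝ᵥ (-B).mulVec x = -(y ⬝ᵥ B.mulVec x) := by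
    rw [Matrix.neg_mulVec, dotProduct_neg]
  have key : x ⬝ᵥ A.mulVec x + y ⬝ᵥ C.mulVec y = 0 := by linarith
  have hCy : 0 ≤ y ⬝ᵥ C.mulVec y := hC.re_dotProduct_nonneg y
  have hx0 : x = 0 := by
    by_contra hxne
    have := hA x hxne
    linarith
  have hBty : Bᵀ.mulVec y = 0 := by
    rw [hx0] at h1; simpa using h1
  have hy0 : y = 0 := BT_injective_aux n m B hB y hBty
  funext i
  cases i with
  | inl i => exact congrFun hx0 i
  | inr j => exact congrFun hy0 j

/-- The generalized saddle point matrix `𝒜 = [[A, Bᵀ], [−B, C]]`, with `A`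
positive definite (not necessarily symmetric), `C` symmetric positive semidefinite and `B`
of full row rank, is invertible; equivalently, `𝒜 u = b` has a unique solution for every `b`. -/
theorem saddlePointMatrix_isUnit
    (n m : ℕ) (A : Matrix (Fin n) (Fin n) ℝ)
    (hA : ∀ x : Fin n → ℝ, x ≠ 0 → 0 < x ⬝ᵥ A.mulVec x)
    (C : Matrix (Fin m) (Fin m) ℝ) (hC : C.PosSemidef)
    (B : Matrix (Fin m) (Fin n) ℝ) (hB : B.rank = m) :
    IsUnit (Matrix.fromBlocks A Bᵀ (-B) C) ∧
      ∀ b : Fin n ⊕ Fin m → ℝ, ∃! u : Fin n ⊕ Fin m → ℝ,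
        (Matrix.fromBlocks A Bᵀ (-B) C).mulVec u = b := by
  set M := Matrix.fromBlocks A Bᵀ (-B) C with hM
  have hinj : Function.Injective M.mulVec := by
    have : Function.Injective M.mulVecLin := by
      rw [← LinearMap.ker_eq_bot, LinearMap.ker_eq_bot']
      exact fun u hu => saddle_ker_aux n m A hA C hC B hB u hu
    exact this
  have hU : IsUnit M := Matrix.mulVec_injective_iff_isUnit.mp hinj
  have hdet : IsUnit M.det := (Matrix.isUnit_iff_isUnit_det M).mp hU
  refine ⟨hU, fun b => ?_⟩
  refine ⟨M⁻¹.mulVec b, ?_, fun v hv => ?_⟩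
  · show M.mulVec (M⁻¹.mulVec b) = b
    rw [Matrix.mulVec_mulVec, Matrix.mul_nonsing_inv _ hdet, Matrix.one_mulVec]
  · rw [← hv, Matrix.mulVec_mulVec, Matrix.nonsing_inv_mul _ hdet, Matrix.one_mulVec]
end

section
/- Let A be a real n×n matrix with xᵀAx > 0 for all nonzero real x, C a real m×m symmetric positive semidefinite matrix, B a real m×n matrix of full row rank, and α, β > 0. With M = (1/2)·[[αI + A, Bᵀ], [−B, βI + C]] and N = (1/2)·[[αI − A, −Bᵀ], [B, βI − C]], suppose λ ∈ ℂ and u = (x; y) ∈ ℂ^{n+m} is a nonzero vector with N u = λ M u, where x ∈ ℂⁿ denotes the first n components of u and y ∈ ℂᵐ the last m components. Then x ≠ 0. -/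
open Matrix

open Matrix

/-- Full row rank implies the transpose has trivial kernel. -/
lemma aux_transpose_mulVec_eq_zero {n m : ℕ} (B : Matrix (Fin m) (Fin n) ℝ) (hB : B.rank = m)
    (v : Fin m → ℝ) (hv : Bᵀ.mulVec v = 0) : v = 0 := by
  have h1 : Bᵀ.rank = m := by rw [Matrix.rank_transpose, hB]
  have h2 := LinearMap.finrank_range_add_finrank_ker Bᵀ.mulVecLin
  rw [Matrix.rank] at h1
  simp [h1, Module.finrank_pi] at h2
  have hm : v ∈ LinearMap.ker Bᵀ.mulVecLin := hv
  simp only [Matrix.mulVecLin_transpose] at hm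
  rwa [h2, Submodule.mem_bot] at hm

/-- In the shift-splitting setting, if `u = (x; y) ≠ 0` satisfies
`N u = λ M u`, then the first block `x` is nonzero. -/
theorem eigenvector_first_block_ne_zero
    (n m : ℕ) (A : Matrix (Fin n) (Fin n) ℝ)
    (hA : ∀ x : Fin n → ℝ, x ≠ 0 → 0 < x ⬝ᵥ A.mulVec x)
    (C : Matrix (Fin m) (Fin m) ℝ) (hC : C.PosSemidef)
    (B : Matrix (Fin m) (Fin n) ℝ) (hB : B.rank = m)
    (α β : ℝ) (hα : 0 < α) (hβ : 0 < β)
    (lam : ℂ) (u : Fin n ⊕ Fin m → ℂ) (hu : u ≠ 0)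
    (heig : ((NSS A B C α β).map Complex.ofReal).mulVec u
      = lam • ((MSS A B C α β).map Complex.ofReal).mulVec u) :
    (fun i : Fin n => u (Sum.inl i)) ≠ 0 := by
  intro hx0
  have hx : ∀ i, u (Sum.inl i) = 0 := fun i => congrFun hx0 i
  -- the second block is nonzero
  have hy : ∃ j, u (Sum.inr j) ≠ 0 := by
    by_contra hy
    push_neg at hy
    apply hu
    funext k
    cases k with
    | inl i => exact hx i
    | inr j => exact hy j
  -- it suffices to show the second block vanishes
  suffices hyz : ∀ j, u (Sum.inr j) = 0 by
    obtain ⟨j, hj⟩ := hy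
    exact hj (hyz j)
  by_cases hlam : lam = -1
  · -- second block equation forces y = 0 when lam = -1
    intro j
    have h := congrFun heig (Sum.inr j)
    simp only [NSS, MSS, Matrix.mulVec, dotProduct, Fintype.sum_sum_type,
      Matrix.map_apply, Matrix.smul_apply, Matrix.fromBlocks_apply₂₁,
      Matrix.fromBlocks_apply₂₂, Pi.smul_apply, smul_eq_mul, hx, mul_zero,
      Finset.sum_const_zero, zero_add, Matrix.neg_apply, Matrix.transpose_apply,
      Matrix.sub_apply, Matrix.add_apply, Matrix.one_apply] at h
    push_cast at h
    simp only [apply_ite Complex.ofReal, Complex.ofReal_one, Complex.ofReal_zero,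
      mul_ite, ite_mul, mul_one, mul_zero, zero_mul, sub_mul, add_mul, mul_sub, mul_add,
      Finset.sum_sub_distrib, Finset.sum_add_distrib, Finset.sum_ite_eq, Finset.mem_univ,
      if_true] at h
    rw [hlam] at h
    have hb : (β : ℂ) * u (Sum.inr j) = 0 := by linear_combination h
    have hb0 : (β : ℂ) ≠ 0 := by exact_mod_cast hβ.ne'
    exact (mul_eq_zero.mp hb).resolve_left hb0
  · -- first block equation forces Bᵀ y = 0; full row rank forces y = 0
    have hS : ∀ i, ∑ x : Fin m, (B x i : ℂ) * u (Sum.inr x) = 0 := by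
      intro i
      have h := congrFun heig (Sum.inl i)
      simp only [NSS, MSS, Matrix.mulVec, dotProduct, Fintype.sum_sum_type,
        Matrix.map_apply, Matrix.smul_apply, Matrix.fromBlocks_apply₁₁,
        Matrix.fromBlocks_apply₁₂, Pi.smul_apply, smul_eq_mul, hx, mul_zero,
        Finset.sum_const_zero, zero_add, Matrix.neg_apply, Matrix.transpose_apply] at h
      push_cast at h
      have e1 : ∑ x : Fin m, (1/2 : ℂ) * -(B x i : ℂ) * u (Sum.inr x)
          = (-(1/2) : ℂ) * ∑ x : Fin m, (B x i : ℂ) * u (Sum.inr x) := by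
        rw [Finset.mul_sum]; exact Finset.sum_congr rfl fun x _ => by ring
      have e2 : ∑ x : Fin m, (1/2 : ℂ) * (B x i : ℂ) * u (Sum.inr x)
          = (1/2 : ℂ) * ∑ x : Fin m, (B x i : ℂ) * u (Sum.inr x) := by
        rw [Finset.mul_sum]; exact Finset.sum_congr rfl fun x _ => by ring
      rw [e1, e2] at h
      have h1 : (1 + lam) * ∑ x : Fin m, (B x i : ℂ) * u (Sum.inr x) = 0 := by
        linear_combination (-2 : ℂ) * h
      have hl : (1 : ℂ) + lam ≠ 0 := by
        intro hc
        apply hlam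
        linear_combination hc
      exact (mul_eq_zero.mp h1).resolve_left hl
    -- split into real and imaginary parts
    have hre : Bᵀ.mulVec (fun j => (u (Sum.inr j)).re) = 0 := by
      funext i
      have := congrArg Complex.re (hS i)
      simpa [Matrix.mulVec, dotProduct, Matrix.transpose_apply, Complex.re_sum,
        Complex.ofReal_mul] using this
    have him : Bᵀ.mulVec (fun j => (u (Sum.inr j)).im) = 0 := by
      funext i
      have := congrArg Complex.im (hS i)
      simpa [Matrix.mulVec, dotProduct, Matrix.transpose_apply, Complex.im_sum] using this
    have hre0 := aux_transpose_mulVec_eq_zero B hB _ hre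
    have him0 := aux_transpose_mulVec_eq_zero B hB _ him
    intro j
    have h1 : (u (Sum.inr j)).re = 0 := congrFun hre0 j
    have h2 : (u (Sum.inr j)).im = 0 := congrFun him0 j
    exact Complex.ext h1 h2
end

section
/- Let A be a real n×n matrix with xᵀAx > 0 for all nonzero real x, C a real m×m symmetric positive semidefinite matrix, B a real m×n matrix of full row rank, α, β > 0, M = (1/2)·[[αI + A, Bᵀ], [−B, βI + C]] and N = (1/2)·[[αI − A, −Bᵀ], [B, βI − C]]. Suppose λ ∈ ℂ and u = (x; y) ∈ ℂ^{n+m} is a nonzero vector with N u = λ M u, and suppose moreover that Bx = 0. Then (α − x*Ax)·x*x = λ·(α + x*Ax)·x*x, and consequently |λ| = |α − x*Ax| / |α + x*Ax| < 1 (using x ≠ 0 and the normalization x*x = ‖x‖² > 0). -/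
/-!
Pairing the first block row of `N u = λ M u` with `x` removes the coupling term `x* Bᵀ y`,
because `B x = 0` and `B` is real; what is left is `α x*x − x*Ax = λ (α x*x + x*Ax)`.
As `x*x > 0` and `Re (x*Ax) > 0`, the number `w = x*Ax / x*x` has positive real part, so
`|α − w| < |α + w|` and `λ = (α − w)/(α + w)` lies in the open unit disc.

The vector `x` cannot vanish: otherwise the first block row reads `(1 + λ) Bᵀ y = 0`, and
`λ = −1` turns the second one into `2β y = 0`; either way full row rank of `B` gives `y = 0`.
-/

open Matrix

section Complexification

variable {m n : Type*} [Fintype m] [Fintype n]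

lemma vecMul_map_ofReal_injective {B : Matrix m n ℝ} (hB : B.rank = Fintype.card m) :
    Function.Injective (B.map Complex.ofReal).vecMul := by
  have hrows : LinearIndependent ℝ B.row := by
    rw [linearIndependent_iff_card_eq_finrank_span, Set.finrank, ← rank_eq_finrank_span_row, hB]
  rw [vecMul_injective_iff]
  convert (linearIndependent_algebraMap_comp_iff (S := ℂ)).2 hrows using 1 <;> rfl

lemma re_star_dotProduct_map_ofReal_mulVec (A : Matrix n n ℝ) (x : n → ℂ) :
    (star x ⬝ᵥ A.map Complex.ofReal *ᵥ x).re
      = (fun i => (x i).re) ⬝ᵥ A *ᵥ (fun i => (x i).re)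
        + (fun i => (x i).im) ⬝ᵥ A *ᵥ (fun i => (x i).im) := by
  simp only [dotProduct, mulVec, Complex.re_sum, Complex.mul_re, Pi.star_apply,
    Complex.star_def, Complex.conj_re, Complex.conj_im, map_apply, Complex.im_ofReal_mul,
    Complex.ofReal_re, Complex.ofReal_im, Finset.mul_sum, ← Finset.sum_add_distrib]
  refine Finset.sum_congr rfl fun i _ => Finset.sum_congr rfl fun j _ => ?_
  ring

lemma re_star_dotProduct_map_ofReal_mulVec_pos {A : Matrix n n ℝ}
    (hA : ∀ v : n → ℝ, v ≠ 0 → 0 < v ⬝ᵥ A *ᵥ v) {x : n → ℂ} (hx : x ≠ 0) :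
    0 < (star x ⬝ᵥ A.map Complex.ofReal *ᵥ x).re := by
  have hA' (v : n → ℝ) : 0 ≤ v ⬝ᵥ A *ᵥ v := by
    rcases eq_or_ne v 0 with rfl | hv
    · simp
    · exact (hA v hv).le
  rw [re_star_dotProduct_map_ofReal_mulVec]
  by_cases hre : (fun i => (x i).re) = 0
  · have him : (fun i => (x i).im) ≠ 0 := fun him =>
      hx (funext fun i => Complex.ext (congrFun hre i) (congrFun him i))
    linarith [hA _ him, hA' fun i => (x i).re]
  · linarith [hA _ hre, hA' fun i => (x i).im]

end Complexification

open scoped ComplexOrder in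
lemma re_div_pos {z w : ℂ} (hz : 0 < z.re) (hw : 0 < w) : 0 < (z / w).re := by
  obtain ⟨r, hr, rfl⟩ := RCLike.pos_iff_exists_ofReal.1 hw
  simpa using div_pos hz hr

lemma norm_ofReal_sub_lt_norm_ofReal_add {a : ℝ} {z : ℂ} (ha : 0 < a) (hz : 0 < z.re) :
    ‖(a : ℂ) - z‖ < ‖(a : ℂ) + z‖ := by
  rw [Complex.norm_def, Complex.norm_def]
  apply Real.sqrt_lt_sqrt (Complex.normSq_nonneg _)
  simp only [Complex.normSq_apply, Complex.add_re, Complex.add_im, Complex.sub_re,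
    Complex.sub_im, Complex.ofReal_re, Complex.ofReal_im]
  nlinarith [mul_pos ha hz]

open scoped ComplexOrder in
lemma norm_lt_one_of_sub_eq_mul_add {a : ℝ} {p s lam : ℂ} (ha : 0 < a) (hp : 0 < p.re)
    (hs : 0 < s) (h : a * s - p = lam * (a * s + p)) :
    ((a : ℂ) - p / s) * s = lam * (((a : ℂ) + p / s) * s) ∧
      ‖lam‖ = ‖(a : ℂ) - p / s‖ / ‖(a : ℂ) + p / s‖ ∧ ‖lam‖ < 1 := by
  have hnorm := norm_ofReal_sub_lt_norm_ofReal_add ha (re_div_pos hp hs)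
  have hd : (a : ℂ) + p / s ≠ 0 := norm_pos_iff.1 ((norm_nonneg _).trans_lt hnorm)
  have hmul : ((a : ℂ) - p / s) * s = lam * (((a : ℂ) + p / s) * s) := by
    rwa [sub_mul, add_mul, div_mul_cancel₀ _ hs.ne']
  have hlam : lam = ((a : ℂ) - p / s) / ((a : ℂ) + p / s) := by
    rw [eq_div_iff hd]
    exact (mul_right_cancel₀ hs.ne' (hmul.trans (mul_assoc _ _ _).symm)).symm
  refine ⟨hmul, ?_⟩
  rw [hlam, norm_div]
  exact ⟨rfl, (div_lt_one (norm_pos_iff.2 hd)).2 hnorm⟩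

section ShiftSplitting

variable {n m : ℕ} (A : Matrix (Fin n) (Fin n) ℝ) (B : Matrix (Fin m) (Fin n) ℝ)
  (C : Matrix (Fin m) (Fin m) ℝ) (α β : ℝ)

lemma NSS_map_ofReal : (NSS A B C α β).map Complex.ofReal
    = (1 / 2 : ℂ) • fromBlocks ((α : ℂ) • 1 - A.map Complex.ofReal) (-(B.map Complex.ofReal)ᵀ)
        (B.map Complex.ofReal) ((β : ℂ) • 1 - C.map Complex.ofReal) := by
  ext (i | i) (j | j) <;> simp [NSS, one_apply, apply_ite Complex.ofReal]

lemma MSS_map_ofReal : (MSS A B C α β).map Complex.ofReal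
    = (1 / 2 : ℂ) • fromBlocks ((α : ℂ) • 1 + A.map Complex.ofReal) (B.map Complex.ofReal)ᵀ
        (-B.map Complex.ofReal) ((β : ℂ) • 1 + C.map Complex.ofReal) := by
  ext (i | i) (j | j) <;> simp [MSS, one_apply, apply_ite Complex.ofReal]

lemma NSS_mulVec_eq_smul_MSS_mulVec_iff (lam : ℂ) (u : Fin n ⊕ Fin m → ℂ) :
    (NSS A B C α β).map Complex.ofReal *ᵥ u = lam • (MSS A B C α β).map Complex.ofReal *ᵥ u ↔
      (α : ℂ) • (u ∘ Sum.inl) - A.map Complex.ofReal *ᵥ (u ∘ Sum.inl)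
          - (B.map Complex.ofReal)ᵀ *ᵥ (u ∘ Sum.inr)
        = lam • ((α : ℂ) • (u ∘ Sum.inl) + A.map Complex.ofReal *ᵥ (u ∘ Sum.inl)
          + (B.map Complex.ofReal)ᵀ *ᵥ (u ∘ Sum.inr)) ∧
      B.map Complex.ofReal *ᵥ (u ∘ Sum.inl) + (β : ℂ) • (u ∘ Sum.inr)
          - C.map Complex.ofReal *ᵥ (u ∘ Sum.inr)
        = lam • (-(B.map Complex.ofReal *ᵥ (u ∘ Sum.inl)) + (β : ℂ) • (u ∘ Sum.inr)
          + C.map Complex.ofReal *ᵥ (u ∘ Sum.inr)) := by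
  rw [NSS_map_ofReal, MSS_map_ofReal, smul_mulVec, smul_mulVec, smul_comm lam,
    (smul_right_injective _ (by norm_num : (1 / 2 : ℂ) ≠ 0)).eq_iff, fromBlocks_mulVec,
    fromBlocks_mulVec, funext_iff, Sum.forall, funext_iff, funext_iff]
  simp only [Pi.smul_apply, Sum.elim_inl, Sum.elim_inr, Pi.add_apply, Pi.sub_apply, Pi.neg_apply,
    add_mulVec, smul_mulVec, one_mulVec, neg_mulVec, smul_eq_mul, sub_eq_add_neg, add_assoc]

variable {A B C α β} {lam : ℂ} {u : Fin n ⊕ Fin m → ℂ}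

lemma comp_inl_ne_zero_of_NSS_mulVec_eq (hB : B.rank = m) (hβ : β ≠ 0) (hu : u ≠ 0)
    (heig : (NSS A B C α β).map Complex.ofReal *ᵥ u
      = lam • (MSS A B C α β).map Complex.ofReal *ᵥ u) :
    u ∘ Sum.inl ≠ 0 := by
  intro hx
  rw [NSS_mulVec_eq_smul_MSS_mulVec_iff, hx] at heig
  obtain ⟨htop, hbot⟩ := heig
  simp only [mulVec_zero, smul_zero, sub_zero, zero_sub, neg_zero, zero_add, add_zero] at htop hbot
  suffices hy : u ∘ Sum.inr = 0 by
    exact hu (by rw [← Sum.elim_comp_inl_inr u, hx, hy]; ext (i | i) <;> rfl)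
  have hBy : (1 + lam) • (B.map Complex.ofReal)ᵀ *ᵥ (u ∘ Sum.inr) = 0 := by
    rw [add_smul, one_smul, ← htop, add_neg_cancel]
  rcases smul_eq_zero.1 hBy with hlam | hBy
  · have h2β : (2 * β : ℂ) • (u ∘ Sum.inr) = 0 := by
      rw [eq_neg_of_add_eq_zero_right hlam] at hbot
      linear_combination (norm := module) hbot
    exact (smul_eq_zero.1 h2β).resolve_left (by exact_mod_cast mul_ne_zero two_ne_zero hβ)
  · rw [mulVec_transpose] at hBy
    exact vecMul_map_ofReal_injective (by simpa using hB) (hBy.trans (zero_vecMul _).symm)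

lemma sub_eq_mul_add_of_NSS_mulVec_eq
    (heig : (NSS A B C α β).map Complex.ofReal *ᵥ u
      = lam • (MSS A B C α β).map Complex.ofReal *ᵥ u)
    (hBx : B.map Complex.ofReal *ᵥ (u ∘ Sum.inl) = 0) :
    (α : ℂ) * (star (u ∘ Sum.inl) ⬝ᵥ (u ∘ Sum.inl))
        - star (u ∘ Sum.inl) ⬝ᵥ A.map Complex.ofReal *ᵥ (u ∘ Sum.inl)
      = lam * ((α : ℂ) * (star (u ∘ Sum.inl) ⬝ᵥ (u ∘ Sum.inl))
        + star (u ∘ Sum.inl) ⬝ᵥ A.map Complex.ofReal *ᵥ (u ∘ Sum.inl)) := by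
  have hBy : star (u ∘ Sum.inl) ⬝ᵥ (B.map Complex.ofReal)ᵀ *ᵥ (u ∘ Sum.inr) = 0 := by
    have hconj : (B.map Complex.ofReal)ᵀ = (B.map Complex.ofReal)ᴴ := by ext; simp
    rw [dotProduct_mulVec, hconj, vecMul_conjTranspose, star_star, hBx, star_zero, zero_dotProduct]
  have htop := congrArg (star (u ∘ Sum.inl) ⬝ᵥ ·) ((NSS_mulVec_eq_smul_MSS_mulVec_iff ..).1 heig).1
  simpa only [dotProduct_sub, dotProduct_add, dotProduct_smul, hBy, sub_zero, add_zero,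
    smul_eq_mul] using htop

end ShiftSplitting

theorem eigenvalue_formula_of_Bx_eq_zero_general
    (n m : ℕ) (A : Matrix (Fin n) (Fin n) ℝ)
    (hA : ∀ x : Fin n → ℝ, x ≠ 0 → 0 < x ⬝ᵥ A.mulVec x)
    (C : Matrix (Fin m) (Fin m) ℝ)
    (B : Matrix (Fin m) (Fin n) ℝ) (hB : B.rank = m)
    (α β : ℝ) (hα : 0 < α) (hβ : 0 < β)
    (lam : ℂ) (u : Fin n ⊕ Fin m → ℂ) (hu : u ≠ 0)
    (heig : ((NSS A B C α β).map Complex.ofReal).mulVec u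
      = lam • ((MSS A B C α β).map Complex.ofReal).mulVec u)
    (x : Fin n → ℂ) (hx : x = fun i : Fin n => u (Sum.inl i))
    (hBx : (B.map Complex.ofReal).mulVec x = 0)
    (p s : ℂ) (hp : p = star x ⬝ᵥ (A.map Complex.ofReal).mulVec x)
    (hs : s = star x ⬝ᵥ x) :
    ((α : ℂ) - p / s) * s = lam * (((α : ℂ) + p / s) * s) ∧
      ‖lam‖
        = ‖(α : ℂ) - p / s‖ / ‖(α : ℂ) + p / s‖ ∧
      ‖lam‖ < 1 := by
  change x = u ∘ Sum.inl at hx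
  subst hx hp hs
  have hx0 := comp_inl_ne_zero_of_NSS_mulVec_eq hB hβ.ne' hu heig
  open scoped ComplexOrder in
  exact norm_lt_one_of_sub_eq_mul_add hα
    (re_star_dotProduct_map_ofReal_mulVec_pos hA hx0) (dotProduct_star_self_pos_iff.2 hx0)
    (sub_eq_mul_add_of_NSS_mulVec_eq heig hBx)

/-- In the shift-splitting setting, if the nonzero vector `u = (x; y)`
satisfies `N u = λ M u` and moreover `B x = 0`, then, writing `p = x*Ax` and `s = x*x`
(so that `p/s` is the quadratic form at the normalized vector `x/‖x‖`), one has
`(α − p/s)·s = λ·(α + p/s)·s` and consequently `|λ| = |α − p/s| / |α + p/s| < 1`. -/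
theorem eigenvalue_formula_of_Bx_eq_zero
    (n m : ℕ) (A : Matrix (Fin n) (Fin n) ℝ)
    (hA : ∀ x : Fin n → ℝ, x ≠ 0 → 0 < x ⬝ᵥ A.mulVec x)
    (C : Matrix (Fin m) (Fin m) ℝ) (hC : C.PosSemidef)
    (B : Matrix (Fin m) (Fin n) ℝ) (hB : B.rank = m)
    (α β : ℝ) (hα : 0 < α) (hβ : 0 < β)
    (lam : ℂ) (u : Fin n ⊕ Fin m → ℂ) (hu : u ≠ 0)
    (heig : ((NSS A B C α β).map Complex.ofReal).mulVec u
      = lam • ((MSS A B C α β).map Complex.ofReal).mulVec u)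
    (x : Fin n → ℂ) (hx : x = fun i : Fin n => u (Sum.inl i))
    (hBx : (B.map Complex.ofReal).mulVec x = 0)
    (p s : ℂ) (hp : p = star x ⬝ᵥ (A.map Complex.ofReal).mulVec x)
    (hs : s = star x ⬝ᵥ x) :
    ((α : ℂ) - p / s) * s = lam * (((α : ℂ) + p / s) * s) ∧
      ‖lam‖
        = ‖(α : ℂ) - p / s‖ / ‖(α : ℂ) + p / s‖ ∧
      ‖lam‖ < 1 :=
  eigenvalue_formula_of_Bx_eq_zero_general n m A hA C B hB α β hα hβ lam u hu heig x hx hBx p s hp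
    hs
end
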